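/- arXiv:2312.06402 — 2 statements merged into one kernel-verified Lean document; each statement's English description precedes it below -/
import Mathlib

section
/- Let α and β be m×r real matrices of full column rank r (0 < r < m) such that β'α is invertible, and let α_⊥ and β_⊥ be m×(m−r) matrices of full column rank with α'α_⊥ = 0 and β'β_⊥ = 0, and assume α_⊥'β_⊥ is invertible. Then β_⊥(α_⊥'β_⊥)^{−1}α_⊥' + α(β'α)^{−1}β' = I_m. -/
open Matrix

noncomputable section

/-- Gonzalo–Granger identity: if `α, β` are `m×r` of full column rank `r` (`0 < r < m`) with
`β'α` invertible, and `α_⊥, β_⊥` are `m×(m−r)` of full column rank with `α'α_⊥ = 0`,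
`β'β_⊥ = 0` and `α_⊥'β_⊥` invertible, then
`β_⊥(α_⊥'β_⊥)⁻¹α_⊥' + α(β'α)⁻¹β' = I_m`. -/
theorem gonzalo_granger_identity {m r k : ℕ} (hr : 0 < r) (hrm : r < m) (hk : r + k = m)
    (α β : Matrix (Fin m) (Fin r) ℝ) (αp βp : Matrix (Fin m) (Fin k) ℝ)
    (hα : α.rank = r) (hβ : β.rank = r) (hαp : αp.rank = k) (hβp : βp.rank = k)
    (hoα : αᵀ * αp = 0) (hoβ : βᵀ * βp = 0)
    (hβα : IsUnit (βᵀ * α)) (hαβ : IsUnit (αpᵀ * βp)) :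
    βp * (αpᵀ * βp)⁻¹ * αpᵀ + α * (βᵀ * α)⁻¹ * βᵀ = 1 := by
  have e : Fin m ≃ Fin r ⊕ Fin k := (finCongr hk.symm).trans finSumFinEquiv.symm
  have hαpα : αpᵀ * α = 0 := by
    have := congrArg Matrix.transpose hoα
    simpa using this
  have key : fromCols (α * (βᵀ * α)⁻¹) (βp * (αpᵀ * βp)⁻¹) * fromRows βᵀ αpᵀ = 1 := by
    rw [fromCols_mul_fromRows_eq_one_comm e, fromRows_mul_fromCols]
    have h1 : βᵀ * (α * (βᵀ * α)⁻¹) = 1 := by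
      rw [← Matrix.mul_assoc, Matrix.mul_nonsing_inv _ (isUnit_iff_isUnit_det _ |>.mp hβα)]
    have h2 : βᵀ * (βp * (αpᵀ * βp)⁻¹) = 0 := by
      rw [← Matrix.mul_assoc, hoβ, Matrix.zero_mul]
    have h3 : αpᵀ * (α * (βᵀ * α)⁻¹) = 0 := by
      rw [← Matrix.mul_assoc, hαpα, Matrix.zero_mul]
    have h4 : αpᵀ * (βp * (αpᵀ * βp)⁻¹) = 1 := by
      rw [← Matrix.mul_assoc, Matrix.mul_nonsing_inv _ (isUnit_iff_isUnit_det _ |>.mp hαβ)]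
    rw [h1, h2, h3, h4, ← fromBlocks_one]
  rw [fromCols_mul_fromRows] at key
  rw [add_comm] at key
  simpa [Matrix.mul_assoc] using key
end
end

section
/- Let (A_j)_{j≥1} be d×d matrices with A_j = 0 for j > p, and define (Φ_i)_{i≥0} by Φ_0 = I_d and Φ_i = Σ_{j=1}^{min(i,p)} A_j Φ_{i−j} for i ≥ 1. If det(I_d − Σ_{j=1}^p A_j z^j) ≠ 0 for all |z| ≤ 1, then there exist K > 0 and ρ ∈ (0,1) with ‖Φ_i‖ ≤ K ρ^i for all i, and the power series Σ_{i≥0} Φ_i z^i equals (I_d − Σ_{j=1}^p A_j z^j)^{−1} on a disc of radius strictly greater than 1. -/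
open Matrix Finset Polynomial

noncomputable section

attribute [local instance] Matrix.linftyOpNormedRing Matrix.linftyOpNormedAlgebra

set_option maxHeartbeats 2000000 in
/-- Wold/VMA representation of a stable VAR(p): let `(A_j)` be `d×d` matrices with
`A_j = 0` for `j > p`, and define `Φ_0 = I`, `Φ_i = ∑_{j=1}^{i} A_j Φ_{i−j}`. If
`det (I − ∑_{j=1}^p A_j z^j) ≠ 0` for all `|z| ≤ 1`, then `‖Φ_i‖ ≤ K ρ^i` for some
`K > 0`, `ρ ∈ (0,1)`, and the power series `∑_i Φ_i z^i` is a two-sided inverse of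
`I − ∑_{j=1}^p A_j z^j` on a disc of radius strictly greater than `1`. -/
theorem stable_var_vma_representation {d p : ℕ}
    (A : ℕ → Matrix (Fin d) (Fin d) ℂ) (hA : ∀ j, p < j → A j = 0)
    (Φ : ℕ → Matrix (Fin d) (Fin d) ℂ)
    (hΦ0 : Φ 0 = 1)
    (hΦ : ∀ i, 1 ≤ i → Φ i = ∑ j ∈ Finset.Icc 1 i, A j * Φ (i - j))
    (hdet : ∀ z : ℂ, ‖z‖ ≤ 1 →
      Matrix.det ((1 : Matrix (Fin d) (Fin d) ℂ)
        - ∑ j ∈ Finset.Icc 1 p, z ^ j • A j) ≠ 0) :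
    (∃ K : ℝ, 0 < K ∧ ∃ ρ : ℝ, ρ ∈ Set.Ioo (0 : ℝ) 1 ∧
      ∀ i : ℕ, ‖Φ i‖ ≤ K * ρ ^ i) ∧
    ∃ R : ℝ, 1 < R ∧ ∀ z : ℂ, ‖z‖ < R →
      (∑' i : ℕ, z ^ i • Φ i) *
          ((1 : Matrix (Fin d) (Fin d) ℂ) - ∑ j ∈ Finset.Icc 1 p, z ^ j • A j) = 1 ∧
      ((1 : Matrix (Fin d) (Fin d) ℂ) - ∑ j ∈ Finset.Icc 1 p, z ^ j • A j) *
          (∑' i : ℕ, z ^ i • Φ i) = 1 := by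
  classical
  set Fm : ℂ → Matrix (Fin d) (Fin d) ℂ :=
    fun z => 1 - ∑ j ∈ Finset.Icc 1 p, z ^ j • A j with hFmdef
  -- crude exponential bound on Φ
  set a : ℝ := ∑ j ∈ Finset.Icc 1 p, ‖A j‖ with hadef
  have ha0 : 0 ≤ a := Finset.sum_nonneg fun j _ => norm_nonneg _
  have ha1 : (1:ℝ) ≤ 1 + a := by linarith
  set c : ℝ := max 1 ‖(1 : Matrix (Fin d) (Fin d) ℂ)‖ with hcdef
  have hc1 : (1:ℝ) ≤ c := le_max_left _ _
  have hc0 : 0 ≤ c := le_trans zero_le_one hc1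
  have hAsum : ∀ i : ℕ, ∑ j ∈ Finset.Icc 1 i, ‖A j‖ ≤ a := by
    intro i
    calc ∑ j ∈ Finset.Icc 1 i, ‖A j‖ ≤ ∑ j ∈ Finset.Icc 1 (max i p), ‖A j‖ :=
          Finset.sum_le_sum_of_subset_of_nonneg
            (Finset.Icc_subset_Icc le_rfl (le_max_left _ _)) (fun _ _ _ => norm_nonneg _)
      _ = a := by
          rw [hadef]
          refine (Finset.sum_subset (Finset.Icc_subset_Icc le_rfl (le_max_right _ _)) ?_).symm
          intro j hj hj'
          simp only [Finset.mem_Icc] at hj hj'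
          rw [hA j (by omega), norm_zero]
  have hcrude : ∀ i : ℕ, ‖Φ i‖ ≤ c * (1 + a) ^ i := by
    intro i
    induction i using Nat.strong_induction_on with
    | _ i ih =>
      rcases Nat.eq_zero_or_pos i with rfl | hi
      · rw [hΦ0, pow_zero, mul_one]; exact le_max_right _ _
      · rw [hΦ i hi]
        calc ‖∑ j ∈ Finset.Icc 1 i, A j * Φ (i - j)‖
            ≤ ∑ j ∈ Finset.Icc 1 i, ‖A j * Φ (i - j)‖ := norm_sum_le _ _
          _ ≤ ∑ j ∈ Finset.Icc 1 i, ‖A j‖ * (c * (1 + a) ^ (i-1)) := by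
              refine Finset.sum_le_sum fun j hj => ?_
              simp only [Finset.mem_Icc] at hj
              refine (norm_mul_le _ _).trans ?_
              refine mul_le_mul_of_nonneg_left ?_ (norm_nonneg _)
              refine (ih (i - j) (by omega)).trans ?_
              exact mul_le_mul_of_nonneg_left
                (pow_le_pow_right₀ ha1 (by omega)) hc0
          _ = (∑ j ∈ Finset.Icc 1 i, ‖A j‖) * (c * (1 + a) ^ (i-1)) := by
              rw [Finset.sum_mul]
          _ ≤ (1 + a) * (c * (1 + a) ^ (i-1)) := by
              refine mul_le_mul_of_nonneg_right ((hAsum i).trans (by linarith)) (by positivity)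
          _ = c * (1 + a) ^ i := by
              conv_rhs => rw [show i = (i - 1) + 1 by omega]
              rw [pow_succ]; ring
  -- determinant polynomial and its roots
  set P : Polynomial ℂ := ((1 : Matrix (Fin d) (Fin d) (Polynomial ℂ))
      - ∑ j ∈ Finset.Icc 1 p, (X : Polynomial ℂ) ^ j • (A j).map C).det with hPdef
  have hPeval : ∀ z : ℂ, P.eval z = (Fm z).det := by
    intro z
    rw [hPdef, show (((1 : Matrix (Fin d) (Fin d) (Polynomial ℂ))
        - ∑ j ∈ Finset.Icc 1 p, (X : Polynomial ℂ) ^ j • (A j).map C).det).eval z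
      = (Polynomial.evalRingHom z) (((1 : Matrix (Fin d) (Fin d) (Polynomial ℂ))
        - ∑ j ∈ Finset.Icc 1 p, (X : Polynomial ℂ) ^ j • (A j).map C).det) from rfl,
      RingHom.map_det]
    congr 1
    ext i k
    simp only [RingHom.mapMatrix_apply, Matrix.map_apply, Matrix.sub_apply, Matrix.one_apply,
      Matrix.sum_apply, Matrix.smul_apply, smul_eq_mul, coe_evalRingHom, eval_sub,
      eval_finset_sum, eval_mul, eval_pow, eval_X, eval_C, apply_ite (Polynomial.eval z),
      eval_one, eval_zero, hFmdef]
  have hFm0 : Fm 0 = 1 := by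
    rw [hFmdef]
    simp only
    rw [Finset.sum_eq_zero, sub_zero]
    intro j hj
    simp only [Finset.mem_Icc] at hj
    rw [zero_pow (by omega), zero_smul]
  have hPne : P ≠ 0 := by
    intro h
    have h0 := hPeval 0
    rw [h, eval_zero, hFm0, det_one] at h0
    exact zero_ne_one h0
  set t : Finset ℂ := P.roots.toFinset with htdef
  have hroot : ∀ z ∈ t, 1 < ‖z‖ := by
    intro z hz
    by_contra hle
    push_neg at hle
    rw [htdef, Multiset.mem_toFinset, Polynomial.mem_roots'] at hz
    have : (Fm z).det = 0 := by rw [← hPeval z]; exact hz.2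
    exact hdet z hle (by rw [hFmdef] at this; exact this)
  set s : Finset ℝ := insert 2 (t.image (fun z => ‖z‖)) with hsdef
  have hs_ne : s.Nonempty := ⟨2, Finset.mem_insert_self _ _⟩
  set R : ℝ := s.min' hs_ne with hRdef
  have hR1 : 1 < R := by
    rw [hRdef, show (1:ℝ) < s.min' hs_ne ↔ ∀ b ∈ s, 1 < b from Finset.lt_min'_iff s hs_ne]
    intro b hb
    rw [hsdef, Finset.mem_insert] at hb
    rcases hb with rfl | hb
    · norm_num
    · rcases Finset.mem_image.mp hb with ⟨z, hz, rfl⟩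
      exact hroot z hz
  have hRdet : ∀ z : ℂ, ‖z‖ < R → (Fm z).det ≠ 0 := by
    intro z hz hdet0
    have hev : P.eval z = 0 := by rw [hPeval z]; exact hdet0
    have hzt : z ∈ t := Multiset.mem_toFinset.mpr (Polynomial.mem_roots'.mpr ⟨hPne, hev⟩)
    have hle : R ≤ ‖z‖ :=
      Finset.min'_le s _ (Finset.mem_insert_of_mem (Finset.mem_image_of_mem _ hzt))
    linarith
  have hRunit : ∀ z : ℂ, ‖z‖ < R → IsUnit (Fm z) := fun z hz =>
    (Matrix.isUnit_iff_isUnit_det _).mpr (isUnit_iff_ne_zero.mpr (hRdet z hz))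
  -- the inverse function
  set G : ℂ → Matrix (Fin d) (Fin d) ℂ := fun z => Ring.inverse (Fm z) with hGdef
  have hFmdiff : Differentiable ℂ Fm := by
    rw [hFmdef]
    apply (differentiable_const _).sub
    apply Differentiable.fun_sum
    intro j _
    exact (differentiable_pow (𝕜 := ℂ) (𝔸 := ℂ) j).smul (differentiable_const (A j))
  have hGdiff : ∀ z : ℂ, ‖z‖ < R → DifferentiableAt ℂ G z := fun z hz =>
    (hFmdiff z).inverse (hRunit z hz)
  -- the candidate power series
  set q : @FormalMultilinearSeries ℂ ℂ (Matrix (Fin d) (Fin d) ℂ) _ _ _ _ _ _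
      NormedAddCommGroup.toAddCommGroup.toAddCommMonoid NormedSpace.toModule
      PseudoMetricSpace.toUniformSpace.toTopologicalSpace _ _ :=
    fun n => ContinuousMultilinearMap.mkPiRing ℂ (Fin n) (Φ n) with hqdef
  have hqnorm : ∀ n, ‖q n‖ = ‖Φ n‖ := fun n =>
    ContinuousMultilinearMap.norm_mkPiRing (Φ n)
  have hqapply : ∀ (n : ℕ) (z : ℂ), (q n fun _ => z) = z ^ n • Φ n := by
    intro n z
    rw [hqdef]
    simp [ContinuousMultilinearMap.mkPiRing_apply]
  have hr0 : (0:ℝ) ≤ (1+a)⁻¹ := by positivity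
  set r0 : NNReal := ⟨(1+a)⁻¹, hr0⟩ with hr0def
  have hqpos : 0 < q.radius := by
    have hle : (r0 : ENNReal) ≤ q.radius := by
      apply FormalMultilinearSeries.le_radius_of_bound _ c
      intro n
      rw [hqnorm]
      calc ‖Φ n‖ * (r0 : ℝ) ^ n
          = ‖Φ n‖ * ((1+a)⁻¹)^n := rfl
        _ ≤ (c * (1+a)^n) * ((1+a)⁻¹)^n :=
            mul_le_mul_of_nonneg_right (hcrude n) (by positivity)
        _ = c := by
            rw [mul_assoc, ← mul_pow, mul_inv_cancel₀ (by positivity), one_pow, mul_one]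
    refine lt_of_lt_of_le ?_ hle
    rw [ENNReal.coe_pos, ← NNReal.coe_pos]
    show (0:ℝ) < (1+a)⁻¹
    positivity
  have hqsum_eq : ∀ z : ℂ, q.sum z = ∑' i : ℕ, z ^ i • Φ i := by
    intro z
    exact tsum_congr fun n => hqapply n z
  -- local identity: Fm z * (∑ z^i Φ i) = 1 for small z
  have hkey : ∀ z : ℂ, ‖z‖ < (1+a)⁻¹/2 → Fm z * (∑' i : ℕ, z ^ i • Φ i) = 1 := by
    intro z hz
    set b : ℕ → Matrix (Fin d) (Fin d) ℂ :=
      fun j => z ^ j • (if j = 0 then 1 else -A j) with hbdef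
    have hb0 : ∀ j, p < j → b j = 0 := by
      intro j hj
      rw [hbdef]
      simp only
      rw [if_neg (by omega), hA j hj, neg_zero, smul_zero]
    have hbsum : Summable fun j => ‖b j‖ := by
      apply summable_of_ne_finset_zero (s := Finset.range (p+1))
      intro j hj
      rw [Finset.mem_range, not_lt] at hj
      rw [hb0 j (by omega), norm_zero]
    have htb : (∑' j, b j) = Fm z := by
      rw [tsum_eq_sum (s := Finset.range (p+1)) (fun j hj => by
        rw [Finset.mem_range, not_lt] at hj
        exact hb0 j (by omega))]
      rw [Finset.range_eq_Ico, Finset.sum_eq_sum_Ico_succ_bot (Nat.succ_pos p),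
        Nat.succ_eq_add_one, Finset.Ico_add_one_right_eq_Icc, zero_add]
      have hb00 : b 0 = 1 := by
        rw [hbdef]
        simp
      have hbj : ∀ j ∈ Finset.Icc 1 p, b j = -(z ^ j • A j) := by
        intro j hj
        simp only [Finset.mem_Icc] at hj
        rw [hbdef]
        simp only
        rw [if_neg (by omega), smul_neg]
      rw [hb00, Finset.sum_congr rfl hbj, Finset.sum_neg_distrib]
      show 1 + -∑ j ∈ Finset.Icc 1 p, z ^ j • A j = 1 - ∑ j ∈ Finset.Icc 1 p, z ^ j • A j
      rw [sub_eq_add_neg]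
    have hzhalf : ‖z‖ * (1 + a) ≤ 2⁻¹ := by
      have h2 : ‖z‖ * (1+a) < ((1+a)⁻¹/2) * (1+a) :=
        mul_lt_mul_of_pos_right hz (by linarith)
      have h3 : ((1+a)⁻¹/2) * (1+a) = 2⁻¹ := by field_simp
      linarith
    have hasum : Summable fun i : ℕ => ‖z ^ i • Φ i‖ := by
      have hbnd : ∀ i : ℕ, ‖z ^ i • Φ i‖ ≤ c * 2⁻¹ ^ i := by
        intro i
        rw [norm_smul, norm_pow]
        calc ‖z‖ ^ i * ‖Φ i‖ ≤ ‖z‖ ^ i * (c * (1+a)^i) :=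
              mul_le_mul_of_nonneg_left (hcrude i) (by positivity)
          _ = c * (‖z‖ * (1+a))^i := by rw [mul_pow]; ring
          _ ≤ c * 2⁻¹ ^ i := by
              refine mul_le_mul_of_nonneg_left ?_ hc0
              exact pow_le_pow_left₀ (by positivity) hzhalf i
      have hg : Summable fun i : ℕ => c * 2⁻¹ ^ i :=
        (summable_geometric_of_lt_one (by norm_num) (by norm_num)).mul_left c
      exact Summable.of_nonneg_of_le (fun i => norm_nonneg _) hbnd hg
    have hprod := tsum_mul_tsum_eq_tsum_sum_antidiagonal_of_summable_norm hbsum hasum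
    erw [htb] at hprod
    refine hprod.trans ?_
    have hinner : ∀ n : ℕ, (∑ kl ∈ Finset.HasAntidiagonal.antidiagonal n, b kl.1 * (z ^ kl.2 • Φ kl.2))
        = if n = 0 then 1 else 0 := by
      intro n
      rw [Finset.Nat.sum_antidiagonal_eq_sum_range_succ_mk]
      rcases Nat.eq_zero_or_pos n with rfl | hn
      · simp [hbdef, hΦ0]
      · rw [if_neg (by omega)]
        have hterm : ∀ k ∈ Finset.range (n+1), b k * (z ^ (n-k) • Φ (n-k))
            = z ^ n • ((if k = 0 then 1 else -A k) * Φ (n-k)) := by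
          intro k hk
          rw [Finset.mem_range] at hk
          rw [hbdef]
          simp only
          rw [smul_mul_assoc, mul_smul_comm, smul_smul, ← pow_add]
          congr 2
          omega
        rw [Finset.sum_congr rfl hterm, ← Finset.smul_sum, Finset.range_eq_Ico,
          Finset.sum_eq_sum_Ico_succ_bot (Nat.succ_pos n), Nat.succ_eq_add_one, Finset.Ico_add_one_right_eq_Icc,
          if_pos rfl, one_mul, Nat.sub_zero]
        have hneg : ∑ k ∈ Finset.Icc 1 n, (if k = 0 then (1:Matrix (Fin d) (Fin d) ℂ)
              else -A k) * Φ (n-k)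
            = - ∑ k ∈ Finset.Icc 1 n, A k * Φ (n-k) := by
          rw [← Finset.sum_neg_distrib]
          apply Finset.sum_congr rfl
          intro k hk
          simp only [Finset.mem_Icc] at hk
          rw [if_neg (by omega), neg_mul]
        rw [hneg, ← hΦ n hn, add_neg_cancel, smul_zero]
    rw [tsum_eq_single 0 (fun n hn => by rw [hinner n, if_neg hn])]
    rw [hinner 0, if_pos rfl]
  -- equality of G with q.sum near 0, hence HasFPowerSeriesAt G q 0
  have ha_inv_le : (1+a)⁻¹/2 ≤ 1 := by
    have : (1+a)⁻¹ ≤ 1 := by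
      rw [inv_le_one_iff₀]
      right; linarith
    linarith
  have hGq : ∀ z : ℂ, ‖z‖ < (1+a)⁻¹/2 → G z = q.sum z := by
    intro z hz
    have hzR : ‖z‖ < R := by
      have : ‖z‖ < 1 := lt_of_lt_of_le hz (by
        have : (1+a)⁻¹ ≤ 1 := by rw [inv_le_one_iff₀]; right; linarith
        linarith)
      linarith
    rw [hqsum_eq]
    show Ring.inverse (Fm z) = ∑' i : ℕ, z ^ i • Φ i
    rw [← Matrix.nonsing_inv_eq_ringInverse]
    exact Matrix.inv_eq_right_inv (hkey z hz)
  have hq_at : HasFPowerSeriesAt q.sum q 0 :=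
    (q.hasFPowerSeriesOnBall hqpos).hasFPowerSeriesAt
  have hG_at : HasFPowerSeriesAt G q 0 := by
    apply hq_at.congr
    filter_upwards [Metric.ball_mem_nhds (0:ℂ) (show (0:ℝ) < (1+a)⁻¹/2 by positivity)] with w hw
    rw [Metric.mem_ball, dist_zero_right] at hw
    exact (hGq w hw).symm
  -- Cauchy power series on a large ball
  set r1 : ℝ := (1 + R)/2 with hr1def
  have hr1_gt : 1 < r1 := by rw [hr1def]; linarith
  have hr1_lt : r1 < R := by rw [hr1def]; linarith
  have hr1_pos : (0:ℝ) < r1 := by linarith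
  have hr1coe : ((Real.toNNReal r1 : NNReal) : ℝ) = r1 := Real.coe_toNNReal _ hr1_pos.le
  have hGdiffOn : DifferentiableOn ℂ G (Metric.closedBall 0 ((Real.toNNReal r1 : NNReal) : ℝ)) := by
    intro w hw
    apply (hGdiff w ?_).differentiableWithinAt
    rw [Metric.mem_closedBall, dist_zero_right, hr1coe] at hw
    linarith
  have hball := hGdiffOn.hasFPowerSeriesOnBall (Real.toNNReal_pos.mpr hr1_pos)
  have hpq : cauchyPowerSeries G 0 (Real.toNNReal r1) = q :=
    hball.hasFPowerSeriesAt.eq_formalMultilinearSeries hG_at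
  rw [hpq] at hball
  constructor
  · -- exponential decay
    have hrad : ((Real.toNNReal r1 : NNReal) : ENNReal) ≤ q.radius := hball.r_le
    set r2 : NNReal := Real.toNNReal ((1 + r1)/2) with hr2def
    have hr2R : (r2:ℝ) = (1+r1)/2 := Real.coe_toNNReal _ (by linarith)
    have hr2_gt : 1 < (r2:ℝ) := by rw [hr2R]; linarith
    have hr2_lt : (r2 : ENNReal) < q.radius := by
      refine lt_of_lt_of_le ?_ hrad
      rw [ENNReal.coe_lt_coe, ← NNReal.coe_lt_coe, hr2R, hr1coe]
      linarith
    obtain ⟨C, hC, hCb⟩ := q.norm_mul_pow_le_of_lt_radius hr2_lt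
    refine ⟨C, hC, (r2:ℝ)⁻¹, ⟨by positivity, inv_lt_one_of_one_lt₀ hr2_gt⟩, ?_⟩
    intro i
    have hbi := hCb i
    rw [hqnorm] at hbi
    have h2 : (0:ℝ) < (r2:ℝ)^i := by positivity
    calc ‖Φ i‖ = ‖Φ i‖ * (r2:ℝ)^i * ((r2:ℝ)^i)⁻¹ := by field_simp
      _ ≤ C * ((r2:ℝ)^i)⁻¹ := mul_le_mul_of_nonneg_right hbi (by positivity)
      _ = C * ((r2:ℝ)⁻¹)^i := by rw [inv_pow]
  · -- two-sided inverse on a disc of radius r1 > 1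
    refine ⟨r1, hr1_gt, ?_⟩
    intro z hz
    have hzR : ‖z‖ < R := lt_trans hz hr1_lt
    have hsum : G z = ∑' i : ℕ, z ^ i • Φ i := by
      have hmem : z ∈ Metric.eball (0:ℂ) (Real.toNNReal r1) := by
        rw [Metric.mem_eball, edist_zero_right, enorm_eq_nnnorm, ENNReal.coe_lt_coe,
          ← NNReal.coe_lt_coe, coe_nnnorm, hr1coe]
        exact hz
      have hs := hball.sum hmem
      rw [zero_add] at hs
      rw [hs, hqsum_eq]
    have hdetz := hRdet z hzR
    have hG' : (∑' i : ℕ, z ^ i • Φ i) = (Fm z)⁻¹ := by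
      rw [← hsum]
      show G z = (Fm z)⁻¹
      rw [hGdef]
      exact (Matrix.nonsing_inv_eq_ringInverse _).symm
    constructor
    · rw [show ((1 : Matrix (Fin d) (Fin d) ℂ) - ∑ j ∈ Finset.Icc 1 p, z ^ j • A j) = Fm z from rfl,
        hG']
      exact Matrix.nonsing_inv_mul _ (isUnit_iff_ne_zero.mpr hdetz)
    · rw [show ((1 : Matrix (Fin d) (Fin d) ℂ) - ∑ j ∈ Finset.Icc 1 p, z ^ j • A j) = Fm z from rfl,
        hG']
      exact Matrix.mul_nonsing_inv _ (isUnit_iff_ne_zero.mpr hdetz)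
end
end
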